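/- arXiv:1302.0776 — 4 statements merged into one kernel-verified Lean document; each statement's English description precedes it below -/
import Mathlib

section
/- Let g ≥ 2 and l, w₁, w₂ positive integers with gcd(w₁,w₂)=1 and w₁ > w₂. Then the cubic polynomial P(c) = l·w₁²·c³ − (1 − g − 2l·w₂)·w₁·c² − (g − 1 + 2l·w₁)·w₂·c − l·w₂² has exactly one positive real root c_w, and moreover c_w is not equal to 1 and satisfies w₂/w₁ < c_w < 1. -/
/-!
Write `f` for the cubic in `c`. On `c > 0` the function `f c / c ^ 2` is a sum of nondecreasing terms
`l a² c`, `-(g - 1 + 2 l a) b / c`, `-l b² / c²` and a constant, hence strictly increasing, so it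
has at most one zero there. Since `f (b / a) = 3 l b² (b - a) / a < 0` and
`f 1 = (a - b) (l (a + b) + g - 1) > 0`, the intermediate value theorem puts exactly one
positive root in `(b / a, 1)`.
-/

open Set

/-- The cubic of the statement, with `a, b` in the roles of `w₁, w₂`. -/
def cscCubic (g l a b c : ℝ) : ℝ :=
  l * a ^ 2 * c ^ 3 - (1 - g - 2 * l * b) * a * c ^ 2 - (g - 1 + 2 * l * a) * b * c - l * b ^ 2

namespace cscCubic

variable {g l a b : ℝ}

lemma sq_mul_sub_sq_mul (x y : ℝ) :
    y ^ 2 * cscCubic g l a b x - x ^ 2 * cscCubic g l a b y =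
      (x - y) * (l * a ^ 2 * (x * y) ^ 2 + (g - 1 + 2 * l * a) * b * (x * y)
        + l * b ^ 2 * (x + y)) := by
  unfold cscCubic; ring

lemma eval_one : cscCubic g l a b 1 = (a - b) * (l * (a + b) + g - 1) := by
  unfold cscCubic; ring

lemma eval_div (ha : a ≠ 0) : cscCubic g l a b (b / a) = 3 * l * b ^ 2 * (b - a) / a := by
  unfold cscCubic; field_simp; ring

lemma strictMonoOn_div_sq (hg : 1 ≤ g) (hl : 0 < l) (ha : 0 < a) (hb : 0 < b) :
    StrictMonoOn (fun c ↦ cscCubic g l a b c / c ^ 2) (Ioi 0) := by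
  intro x (hx : 0 < x) y (hy : 0 < y) hxy
  rw [div_lt_div_iff₀ (by positivity) (by positivity)]
  have hcoef : 0 ≤ (g - 1 + 2 * l * a) * b := by
    have : 0 < l * a := mul_pos hl ha
    exact mul_nonneg (by linarith) hb.le
  have hbracket : 0 < l * a ^ 2 * (x * y) ^ 2 + (g - 1 + 2 * l * a) * b * (x * y)
      + l * b ^ 2 * (x + y) := by
    have : 0 ≤ (g - 1 + 2 * l * a) * b * (x * y) := mul_nonneg hcoef (by positivity)
    have : 0 < l * a ^ 2 * (x * y) ^ 2 := by positivity
    have : 0 < l * b ^ 2 * (x + y) := by positivity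
    linarith
  linarith [sq_mul_sub_sq_mul (g := g) (l := l) (a := a) (b := b) x y,
    mul_neg_of_neg_of_pos (sub_neg.2 hxy) hbracket]

lemma eval_div_neg (hl : 0 < l) (hb : 0 < b) (hab : b < a) : cscCubic g l a b (b / a) < 0 := by
  have ha : 0 < a := hb.trans hab
  rw [eval_div ha.ne']
  exact div_neg_of_neg_of_pos (mul_neg_of_pos_of_neg (by positivity) (by linarith)) ha

lemma eval_one_pos (hg : 1 ≤ g) (hl : 0 < l) (hb : 0 < b) (hab : b < a) :
    0 < cscCubic g l a b 1 := by
  rw [eval_one]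
  exact mul_pos (by linarith) (by nlinarith)

section roots

variable (hg : 1 ≤ g) (hl : 0 < l) (hb : 0 < b) (hab : b < a)
include hg hl hb hab

lemma mem_Ioo_of_root {c : ℝ} (hc : 0 < c) (hroot : cscCubic g l a b c = 0) :
    c ∈ Ioo (b / a) 1 := by
  have ha : 0 < a := hb.trans hab
  have hmono := strictMonoOn_div_sq hg hl ha hb
  have hzero : cscCubic g l a b c / c ^ 2 = 0 := by rw [hroot, zero_div]
  constructor
  · refine (hmono.lt_iff_lt (div_pos hb ha) hc).1 ?_
    rw [hzero]
    exact div_neg_of_neg_of_pos (eval_div_neg hl hb hab) (by positivity)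
  · refine (hmono.lt_iff_lt hc (mem_Ioi.2 one_pos)).1 ?_
    rw [hzero, one_pow, div_one]
    exact eval_one_pos hg hl hb hab

lemma existsUnique_pos_root : ∃! c : ℝ, 0 < c ∧ cscCubic g l a b c = 0 := by
  have ha : 0 < a := hb.trans hab
  have hcont : ContinuousOn (cscCubic g l a b) (Icc (b / a) 1) := by
    unfold cscCubic; fun_prop
  obtain ⟨c, hc, hroot⟩ := intermediate_value_Ioo ((div_lt_one ha).2 hab).le hcont
    ⟨eval_div_neg hl hb hab, eval_one_pos hg hl hb hab⟩
  have hcpos : 0 < c := (div_pos hb ha).trans hc.1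
  refine ⟨c, ⟨hcpos, hroot⟩, fun y ⟨hy, hyroot⟩ ↦ ?_⟩
  refine (strictMonoOn_div_sq hg hl ha hb).injOn hy hcpos ?_
  simp only [hroot, hyroot, zero_div]

end roots

end cscCubic

theorem stmt_4_general (g l w₁ w₂ : ℤ) (hg : 2 ≤ g) (hl : 0 < l)
    (hw₂ : 0 < w₂) (hw : w₂ < w₁) :
    (∃! c : ℝ, 0 < c ∧
      (l : ℝ) * (w₁ : ℝ) ^ 2 * c ^ 3 - (1 - (g : ℝ) - 2 * l * w₂) * w₁ * c ^ 2
        - ((g : ℝ) - 1 + 2 * l * w₁) * w₂ * c - (l : ℝ) * (w₂ : ℝ) ^ 2 = 0) ∧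
    (∀ c : ℝ, 0 < c →
      (l : ℝ) * (w₁ : ℝ) ^ 2 * c ^ 3 - (1 - (g : ℝ) - 2 * l * w₂) * w₁ * c ^ 2
        - ((g : ℝ) - 1 + 2 * l * w₁) * w₂ * c - (l : ℝ) * (w₂ : ℝ) ^ 2 = 0 →
      c ≠ 1 ∧ (w₂ : ℝ) / (w₁ : ℝ) < c ∧ c < 1) := by
  have hgR : (1 : ℝ) ≤ g := by exact_mod_cast (by omega : 1 ≤ g)
  have hlR : (0 : ℝ) < l := by exact_mod_cast hl
  have hw₂R : (0 : ℝ) < w₂ := by exact_mod_cast hw₂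
  have hwR : (w₂ : ℝ) < w₁ := by exact_mod_cast hw
  refine ⟨cscCubic.existsUnique_pos_root hgR hlR hw₂R hwR, fun c hc hroot ↦ ?_⟩
  obtain ⟨hlo, hhi⟩ := cscCubic.mem_Ioo_of_root hgR hlR hw₂R hwR hc hroot
  exact ⟨hhi.ne, hlo, hhi⟩

theorem stmt_4 (g l w₁ w₂ : ℤ) (hg : 2 ≤ g) (hl : 0 < l)
    (hw₁ : 0 < w₁) (hw₂ : 0 < w₂) (hcop : Int.gcd w₁ w₂ = 1) (hw : w₂ < w₁) :
    (∃! c : ℝ, 0 < c ∧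
      (l : ℝ) * (w₁ : ℝ) ^ 2 * c ^ 3 - (1 - (g : ℝ) - 2 * l * w₂) * w₁ * c ^ 2
        - ((g : ℝ) - 1 + 2 * l * w₁) * w₂ * c - (l : ℝ) * (w₂ : ℝ) ^ 2 = 0) ∧
    (∀ c : ℝ, 0 < c →
      (l : ℝ) * (w₁ : ℝ) ^ 2 * c ^ 3 - (1 - (g : ℝ) - 2 * l * w₂) * w₁ * c ^ 2
        - ((g : ℝ) - 1 + 2 * l * w₁) * w₂ * c - (l : ℝ) * (w₂ : ℝ) ^ 2 = 0 →
      c ≠ 1 ∧ (w₂ : ℝ) / (w₁ : ℝ) < c ∧ c < 1) :=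
  stmt_4_general g l w₁ w₂ hg hl hw₂ hw
end

section
/- Consider the cubic 144c³ + 12(g+1)c² − (23+g)c − 1 = 0 for an integer g ≥ 2. When g = 2 it has the rational root c = 1/3, when g = 23 it has the rational root c = 1/6, and for all other integers g ≥ 2 it has no rational root. -/
/-! By the rational root theorem a rational root `n / d` in lowest terms has `n ∣ -1` and `d ∣ 144`,
so `c = ±1/d` with `d` one of the fifteen divisors of `144`. For each of these thirty candidates the
cubic is linear in `g`, and its only solutions with `g ≥ 2` are `g = 2` (`c = 1/3`) and
`g = 23` (`c = 1/6`). -/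

theorem Rat.cubic_num_den_eq_zero {a b e f : ℤ} {c : ℚ}
    (h : a * c ^ 3 + b * c ^ 2 + e * c + f = 0) :
    a * c.num ^ 3 + b * c.num ^ 2 * c.den + e * c.num * c.den ^ 2 + f * c.den ^ 3 = 0 := by
  have hc : c * c.den = c.num := Rat.mul_den_eq_num c
  qify
  linear_combination (c.den : ℚ) ^ 3 * h
    - (a * (c.num ^ 2 + c.num * c * c.den + c ^ 2 * c.den ^ 2) + b * c.den * (c.num + c * c.den)
      + e * c.den ^ 2) * hc

theorem Rat.num_dvd_and_den_dvd_of_cubic_eq_zero {a b e f : ℤ} {c : ℚ}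
    (h : a * c ^ 3 + b * c ^ 2 + e * c + f = 0) :
    c.num ∣ f ∧ (c.den : ℤ) ∣ a := by
  have key := Rat.cubic_num_den_eq_zero h
  have hcop : IsCoprime c.num c.den := Int.isCoprime_iff_gcd_eq_one.mpr c.reduced
  constructor
  · refine (hcop.pow_right (n := 3)).dvd_of_dvd_mul_right
      ⟨-(a * c.num ^ 2 + b * c.num * c.den + e * c.den ^ 2), ?_⟩
    linear_combination key
  · refine (hcop.symm.pow_right (n := 3)).dvd_of_dvd_mul_right
      ⟨-(b * c.num ^ 2 + e * c.num * c.den + f * c.den ^ 2), ?_⟩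
    linear_combination key

theorem stmt_8 (g : ℤ) (hg : 2 ≤ g) :
    (g = 2 → 144 * (1 / 3 : ℚ) ^ 3 + 12 * ((g : ℚ) + 1) * (1 / 3 : ℚ) ^ 2
      - (23 + (g : ℚ)) * (1 / 3 : ℚ) - 1 = 0) ∧
    (g = 23 → 144 * (1 / 6 : ℚ) ^ 3 + 12 * ((g : ℚ) + 1) * (1 / 6 : ℚ) ^ 2
      - (23 + (g : ℚ)) * (1 / 6 : ℚ) - 1 = 0) ∧
    (g ≠ 2 → g ≠ 23 → ∀ c : ℚ,
      144 * c ^ 3 + 12 * ((g : ℚ) + 1) * c ^ 2 - (23 + (g : ℚ)) * c - 1 ≠ 0) := by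
  refine ⟨by rintro rfl; norm_num, by rintro rfl; norm_num, fun hg2 hg23 c hc => ?_⟩
  have hc : ((144 : ℤ) : ℚ) * c ^ 3 + ((12 * (g + 1) : ℤ) : ℚ) * c ^ 2
      + ((-(23 + g) : ℤ) : ℚ) * c + ((-1 : ℤ) : ℚ) = 0 := by
    push_cast
    linear_combination hc
  have key := Rat.cubic_num_den_eq_zero hc
  obtain ⟨hnum, hden⟩ := Rat.num_dvd_and_den_dvd_of_cubic_eq_zero hc
  have hnum : c.num = 1 ∨ c.num = -1 := Int.isUnit_iff.mp (isUnit_of_dvd_one (dvd_neg.mp hnum))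
  have hden : c.den ∈ Nat.divisors 144 := Nat.mem_divisors.mpr ⟨by exact_mod_cast hden, by norm_num⟩
  rw [show Nat.divisors 144 = {1, 2, 3, 4, 6, 8, 9, 12, 16, 18, 24, 36, 48, 72, 144} by decide] at hden
  simp only [Finset.mem_insert, Finset.mem_singleton] at hden
  rcases hnum with hn | hn <;>
    rcases hden with hd | hd | hd | hd | hd | hd | hd | hd | hd | hd | hd | hd | hd | hd | hd <;>
    simp only [hn, hd] at key <;> omega
end

section
/- Let D(c) = 16c²(37 + 5820c + 197748c² − 1528416c³ + 1622592c⁴). Then there exists a real number ĉ with 0.7 < ĉ < 0.8 such that D(c) < 0 for all c ∈ (0.22, ĉ) and D(c) ≥ 0 for all c ≥ ĉ. -/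
/-!
Write `D(c) = 16 c² q(c)` with `q` the quartic factor. Expanded around `c = 0.7`, `q` has negative
constant term and positive coefficients otherwise, so `q` is strictly increasing on `[0.7, ∞)` and,
being negative at `0.7` and positive at `0.8`, has a unique zero `ĉ` there. Expanded around
`c = 0.22`, the cubic and quartic terms are dominated by the negative quadratic term as long as
`c ≤ 0.7`, so `q < 0` on `(0.22, 0.7]` as well.
-/

open Set

def discQuartic (c : ℝ) : ℝ :=
  37 + 5820 * c + 197748 * c ^ 2 - 1528416 * c ^ 3 + 1622592 * c ^ 4

lemma continuous_discQuartic : Continuous discQuartic := by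
  unfold discQuartic
  fun_prop

lemma discQuartic_seven_tenths_add (x : ℝ) :
    discQuartic (0.7 + x) = -33654.8288 + 262091.904 * x + 1758494.88 * x ^ 2
      + 3014841.6 * x ^ 3 + 1622592 * x ^ 4 := by
  unfold discQuartic
  norm_num
  ring

lemma discQuartic_twentytwo_hundredths_add (x : ℝ) :
    discQuartic (0.22 + x) = -1585.15125248 - 59987.444736 * x - 339805.8432 * x ^ 2
      - 100535.04 * x ^ 3 + 1622592 * x ^ 4 := by
  unfold discQuartic
  norm_num
  ring

lemma discQuartic_strictMonoOn : StrictMonoOn discQuartic (Ici 0.7) := by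
  intro a ha b hb hab
  obtain ⟨x, hx, rfl⟩ : ∃ x : ℝ, 0 ≤ x ∧ 0.7 + x = a := ⟨a - 0.7, by simp_all, by ring⟩
  obtain ⟨y, rfl⟩ : ∃ y : ℝ, 0.7 + y = b := ⟨b - 0.7, by ring⟩
  rw [discQuartic_seven_tenths_add, discQuartic_seven_tenths_add]
  have hxy : x < y := by linarith
  gcongr

lemma discQuartic_neg_of_mem_Ioc {c : ℝ} (hc : c ∈ Ioc 0.22 0.7) : discQuartic c < 0 := by
  obtain ⟨x, rfl⟩ : ∃ x : ℝ, 0.22 + x = c := ⟨c - 0.22, by ring⟩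
  obtain ⟨hx₀, hx₁⟩ : 0 < x ∧ x ≤ 0.48 := by constructor <;> linarith [hc.1, hc.2]
  rw [discQuartic_twentytwo_hundredths_add]
  have hx₃ : x ^ 4 ≤ 0.48 * x ^ 3 := by nlinarith [pow_pos hx₀ 3]
  have hx₂ : x ^ 3 ≤ 0.48 * x ^ 2 := by nlinarith [pow_pos hx₀ 2]
  nlinarith [pow_pos hx₀ 2]

lemma exists_discQuartic_eq_zero : ∃ c ∈ Ioo (0.7 : ℝ) 0.8, discQuartic c = 0 :=
  intermediate_value_Ioo (by norm_num) continuous_discQuartic.continuousOn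
    ⟨by norm_num [discQuartic], by norm_num [discQuartic]⟩

theorem stmt_18 :
    ∃ chat : ℝ, 0.7 < chat ∧ chat < 0.8 ∧
      (∀ c : ℝ, 0.22 < c → c < chat →
        16 * c ^ 2 * (37 + 5820 * c + 197748 * c ^ 2
          - 1528416 * c ^ 3 + 1622592 * c ^ 4) < 0) ∧
      (∀ c : ℝ, chat ≤ c →
        0 ≤ 16 * c ^ 2 * (37 + 5820 * c + 197748 * c ^ 2
          - 1528416 * c ^ 3 + 1622592 * c ^ 4)) := by
  obtain ⟨chat, ⟨hlo, hhi⟩, hroot⟩ := exists_discQuartic_eq_zero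
  have hchat : chat ∈ Ici 0.7 := hlo.le
  refine ⟨chat, hlo, hhi, fun c hc hcchat => ?_, fun c hcchat => ?_⟩
  · have hneg : discQuartic c < 0 := by
      rcases le_or_gt c 0.7 with h | h
      · exact discQuartic_neg_of_mem_Ioc ⟨hc, h⟩
      · exact hroot ▸ discQuartic_strictMonoOn h.le hchat hcchat
    have hc₀ : 0 < c := by linarith
    exact mul_neg_of_pos_of_neg (by positivity) hneg
  · have hnonneg : 0 ≤ discQuartic c :=
      hroot ▸ discQuartic_strictMonoOn.monotoneOn hchat (hchat.trans hcchat) hcchat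
    exact mul_nonneg (by positivity) hnonneg
end

section
/- Let g, l, w₁, w₂ be positive integers with g ≤ 1 + 3l·min(w₁, w₂), and let c > 0 be real. Then for all 𝑧 ∈ (−1,1), the quantity l·w₂³(1−𝑧)² + w₂²(1−𝑧)(7l·w₁ + 1 − g + (1 − g − l·w₁)𝑧)·c + 2w₁w₂(g − 1 + 2l(w₁+w₂) + l(w₂−w₁)𝑧 + (1 − g − l(w₁+w₂))𝑧²)·c² + w₁²(1+𝑧)(1 − g + 7l·w₂ + (g − 1 + l·w₂)𝑧)·c³ + l·w₁³(1+𝑧)²·c⁴ is strictly positive. -/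
/-!
The parameter `g` enters the quartic only through `(1 - g) (1 - z²) c (w₂ - w₁ c)²`, so the
quartic is antitone in `g` and it suffices to treat `1 ≤ g ≤ 1 + 3 l min(w₁, w₂)`. There every
coefficient in `c` is nonnegative on `(-1, 1)`, and those of `c⁰`, `c²`, `c⁴` are positive: for
`g ≤ 1 + 3 l w₁` the last factor of the coefficient of `c` is at least `4 l w₁ (1 - z)` (and
symmetrically for `c³`, under `z ↦ -z`), while for `g ≥ 1` the coefficient of `c²` is a positive
combination of `1 - z²`, `(1 - z)(2 + z)` and `(1 + z)(2 - z)`.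
-/

open Set

namespace ExtremalQuartic

def quartic (g l w₁ w₂ c z : ℝ) : ℝ :=
  l * w₂ ^ 3 * (1 - z) ^ 2
    + w₂ ^ 2 * (1 - z) * (7 * l * w₁ + 1 - g + (1 - g - l * w₁) * z) * c
    + 2 * w₁ * w₂ * (g - 1 + 2 * l * (w₁ + w₂) + l * (w₂ - w₁) * z
        + (1 - g - l * (w₁ + w₂)) * z ^ 2) * c ^ 2
    + w₁ ^ 2 * (1 + z) * (1 - g + 7 * l * w₂ + (g - 1 + l * w₂) * z) * c ^ 3
    + l * w₁ ^ 3 * (1 + z) ^ 2 * c ^ 4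

theorem quartic_sub_quartic (g g' l w₁ w₂ c z : ℝ) :
    quartic g l w₁ w₂ c z - quartic g' l w₁ w₂ c z
      = (g' - g) * (1 - z ^ 2) * c * (w₂ - w₁ * c) ^ 2 := by
  unfold quartic
  ring

theorem quartic_antitone_left {g g' l w₁ w₂ c z : ℝ} (hgg' : g ≤ g') (hc : 0 ≤ c)
    (hz : z ∈ Icc (-1 : ℝ) 1) : quartic g' l w₁ w₂ c z ≤ quartic g l w₁ w₂ c z := by
  have hz2 : 0 ≤ 1 - z ^ 2 := by nlinarith [hz.1, hz.2]
  have hgap : 0 ≤ (g' - g) * (1 - z ^ 2) * c * (w₂ - w₁ * c) ^ 2 := by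
    have := sub_nonneg.2 hgg'
    positivity
  linarith [quartic_sub_quartic g g' l w₁ w₂ c z]

theorem linear_coeff_nonneg {g l w z : ℝ} (hlw : 0 ≤ l * w) (hg : g ≤ 1 + 3 * l * w)
    (hz : z ∈ Icc (-1 : ℝ) 1) : 0 ≤ 7 * l * w + 1 - g + (1 - g - l * w) * z := by
  calc (0 : ℝ) ≤ 4 * (l * w) * (1 - z) := by nlinarith [hz.2]
    _ ≤ _ := by nlinarith [mul_nonneg (sub_nonneg.2 hg) (neg_le_iff_add_nonneg.1 hz.1)]

theorem cubic_coeff_nonneg {g l w z : ℝ} (hlw : 0 ≤ l * w) (hg : g ≤ 1 + 3 * l * w)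
    (hz : z ∈ Icc (-1 : ℝ) 1) : 0 ≤ 1 - g + 7 * l * w + (g - 1 + l * w) * z := by
  have := linear_coeff_nonneg hlw hg (z := -z) ⟨by linarith [hz.2], by linarith [hz.1]⟩
  linarith

theorem quadratic_coeff_pos {g l w₁ w₂ z : ℝ} (hg : 1 ≤ g) (hl : 0 < l) (hw₁ : 0 < w₁)
    (hw₂ : 0 < w₂) (hz : z ∈ Ioo (-1 : ℝ) 1) :
    0 < g - 1 + 2 * l * (w₁ + w₂) + l * (w₂ - w₁) * z + (1 - g - l * (w₁ + w₂)) * z ^ 2 := by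
  have h₁ : 0 < 1 - z := by linarith [hz.2]
  have h₂ : 0 < 1 + z := by linarith [hz.1]
  have key : g - 1 + 2 * l * (w₁ + w₂) + l * (w₂ - w₁) * z + (1 - g - l * (w₁ + w₂)) * z ^ 2
      = (g - 1) * ((1 - z) * (1 + z))
        + l * (w₁ * ((1 - z) * (1 + (1 + z))) + w₂ * ((1 + z) * (1 + (1 - z)))) := by ring
  rw [key]
  have := sub_nonneg.2 hg
  positivity

theorem quartic_pos_of_one_le {g l w₁ w₂ c z : ℝ} (hg : 1 ≤ g) (hg₁ : g ≤ 1 + 3 * l * w₁)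
    (hg₂ : g ≤ 1 + 3 * l * w₂) (hl : 0 < l) (hw₁ : 0 < w₁) (hw₂ : 0 < w₂) (hc : 0 < c)
    (hz : z ∈ Ioo (-1 : ℝ) 1) : 0 < quartic g l w₁ w₂ c z := by
  have h₁ : 0 < 1 - z := by linarith [hz.2]
  have h₂ : 0 < 1 + z := by linarith [hz.1]
  have hlin := linear_coeff_nonneg (mul_pos hl hw₁).le hg₁ (Ioo_subset_Icc_self hz)
  have hcub := cubic_coeff_nonneg (mul_pos hl hw₂).le hg₂ (Ioo_subset_Icc_self hz)
  have hquad := quadratic_coeff_pos hg hl hw₁ hw₂ hz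
  unfold quartic
  positivity

theorem quartic_pos {g l w₁ w₂ c z : ℝ} (hg₁ : g ≤ 1 + 3 * l * w₁) (hg₂ : g ≤ 1 + 3 * l * w₂)
    (hl : 0 < l) (hw₁ : 0 < w₁) (hw₂ : 0 < w₂) (hc : 0 < c) (hz : z ∈ Ioo (-1 : ℝ) 1) :
    0 < quartic g l w₁ w₂ c z := by
  have h₁ : 1 ≤ 1 + 3 * l * w₁ := by nlinarith [mul_pos hl hw₁]
  have h₂ : 1 ≤ 1 + 3 * l * w₂ := by nlinarith [mul_pos hl hw₂]
  calc 0 < quartic (max g 1) l w₁ w₂ c z :=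
        quartic_pos_of_one_le (le_max_right g 1) (max_le hg₁ h₁) (max_le hg₂ h₂) hl hw₁ hw₂ hc hz
    _ ≤ quartic g l w₁ w₂ c z :=
        quartic_antitone_left (le_max_left g 1) hc.le (Ioo_subset_Icc_self hz)

end ExtremalQuartic

theorem stmt_19_general (g l w₁ w₂ : ℤ) (hl : 0 < l)
    (hw₁ : 0 < w₁) (hw₂ : 0 < w₂) (hbound : g ≤ 1 + 3 * l * min w₁ w₂)
    (c : ℝ) (hc : 0 < c) (z : ℝ) (hz : z ∈ Set.Ioo (-1 : ℝ) 1) :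
    0 < (l : ℝ) * (w₂ : ℝ) ^ 3 * (1 - z) ^ 2
      + (w₂ : ℝ) ^ 2 * (1 - z) * (7 * (l : ℝ) * (w₁ : ℝ) + 1 - (g : ℝ)
          + (1 - (g : ℝ) - (l : ℝ) * (w₁ : ℝ)) * z) * c
      + 2 * (w₁ : ℝ) * (w₂ : ℝ) * ((g : ℝ) - 1 + 2 * (l : ℝ) * ((w₁ : ℝ) + (w₂ : ℝ))
          + (l : ℝ) * ((w₂ : ℝ) - (w₁ : ℝ)) * z
          + (1 - (g : ℝ) - (l : ℝ) * ((w₁ : ℝ) + (w₂ : ℝ))) * z ^ 2) * c ^ 2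
      + (w₁ : ℝ) ^ 2 * (1 + z) * (1 - (g : ℝ) + 7 * (l : ℝ) * (w₂ : ℝ)
          + ((g : ℝ) - 1 + (l : ℝ) * (w₂ : ℝ)) * z) * c ^ 3
      + (l : ℝ) * (w₁ : ℝ) ^ 3 * (1 + z) ^ 2 * c ^ 4 := by
  have hg₁ : g ≤ 1 + 3 * l * w₁ := hbound.trans (by nlinarith [min_le_left w₁ w₂])
  have hg₂ : g ≤ 1 + 3 * l * w₂ := hbound.trans (by nlinarith [min_le_right w₁ w₂])
  exact ExtremalQuartic.quartic_pos (by exact_mod_cast hg₁) (by exact_mod_cast hg₂)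
    (by exact_mod_cast hl) (by exact_mod_cast hw₁) (by exact_mod_cast hw₂) hc hz

theorem stmt_19 (g l w₁ w₂ : ℤ) (hg : 0 < g) (hl : 0 < l)
    (hw₁ : 0 < w₁) (hw₂ : 0 < w₂) (hbound : g ≤ 1 + 3 * l * min w₁ w₂)
    (c : ℝ) (hc : 0 < c) (z : ℝ) (hz : z ∈ Set.Ioo (-1 : ℝ) 1) :
    0 < (l : ℝ) * (w₂ : ℝ) ^ 3 * (1 - z) ^ 2
      + (w₂ : ℝ) ^ 2 * (1 - z) * (7 * (l : ℝ) * (w₁ : ℝ) + 1 - (g : ℝ)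
          + (1 - (g : ℝ) - (l : ℝ) * (w₁ : ℝ)) * z) * c
      + 2 * (w₁ : ℝ) * (w₂ : ℝ) * ((g : ℝ) - 1 + 2 * (l : ℝ) * ((w₁ : ℝ) + (w₂ : ℝ))
          + (l : ℝ) * ((w₂ : ℝ) - (w₁ : ℝ)) * z
          + (1 - (g : ℝ) - (l : ℝ) * ((w₁ : ℝ) + (w₂ : ℝ))) * z ^ 2) * c ^ 2
      + (w₁ : ℝ) ^ 2 * (1 + z) * (1 - (g : ℝ) + 7 * (l : ℝ) * (w₂ : ℝ)
          + ((g : ℝ) - 1 + (l : ℝ) * (w₂ : ℝ)) * z) * c ^ 3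
      + (l : ℝ) * (w₁ : ℝ) ^ 3 * (1 + z) ^ 2 * c ^ 4 :=
  stmt_19_general g l w₁ w₂ hl hw₁ hw₂ hbound c hc z hz
end
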